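/- arXiv:2305.07277 — 4 statements merged into one kernel-verified Lean document; each statement's English description precedes it below -/
import Mathlib

section
/- The series ∑_{d=1}^∞ μ(d) v(d) / d⁶ converges absolutely and ∑_{d=1}^∞ μ(d) v(d) / d⁶ = ∏_p (1 − v(p)/p⁶) = (7/8) ∏_{p odd prime} (1 − (p² + p − 1)/p⁴), the products being over all primes and all odd primes respectively. -/
open Real

/-- `v(d)`: number of solutions of `x² + y² + z² ≡ 0 (mod d²)`. -/
noncomputable def vcount (d : ℕ) : ℕ :=
  Nat.card {t : ZMod (d^2) × ZMod (d^2) × ZMod (d^2) // t.1^2 + t.2.1^2 + t.2.2^2 = 0}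



section Sol
variable {R S : Type*} [CommRing R] [CommRing S]

def Sol (R : Type*) [CommRing R] := {t : R × R × R // t.1^2 + t.2.1^2 + t.2.2^2 = 0}

lemma vcount_eq (d : ℕ) : vcount d = Nat.card (Sol (ZMod (d^2))) := rfl

def Sol.congr (e : R ≃+* S) : Sol R ≃ Sol S where
  toFun t := ⟨(e t.1.1, e t.1.2.1, e t.1.2.2), by
    have := congrArg e t.2; simpa using this⟩
  invFun t := ⟨(e.symm t.1.1, e.symm t.1.2.1, e.symm t.1.2.2), by
    have := congrArg e.symm t.2; simpa using this⟩
  left_inv t := Subtype.ext (by simp [Prod.ext_iff])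
  right_inv t := Subtype.ext (by simp [Prod.ext_iff])

def Sol.prodEquiv : Sol (R × S) ≃ Sol R × Sol S where
  toFun t := ⟨⟨(t.1.1.1, t.1.2.1.1, t.1.2.2.1), by
      have := congrArg Prod.fst t.2; simpa using this⟩,
    ⟨(t.1.1.2, t.1.2.1.2, t.1.2.2.2), by
      have := congrArg Prod.snd t.2; simpa using this⟩⟩
  invFun t := ⟨((t.1.1.1, t.2.1.1), (t.1.1.2.1, t.2.1.2.1), (t.1.1.2.2, t.2.1.2.2)), by
      have h1 := t.1.2; have h2 := t.2.2
      refine Prod.ext ?_ ?_ <;> simp [Prod.ext_iff] <;> first | exact h1 | exact h2⟩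
  left_inv t := Subtype.ext rfl
  right_inv t := Prod.ext (Subtype.ext rfl) (Subtype.ext rfl)

end Sol

lemma vcount_one : vcount 1 = 1 := by
  rw [vcount]
  rw [Nat.card_eq_one_iff_unique]
  constructor
  · constructor; intro a b
    have : Subsingleton (ZMod (1^2)) := by norm_num; infer_instance
    exact Subtype.ext (by ext <;> exact Subsingleton.elim _ _)
  · exact ⟨⟨(0,0,0), by simp⟩⟩

lemma vcount_two : vcount 2 = 8 := by
  rw [vcount, Nat.card_eq_fintype_card]
  decide

lemma vcount_mul {m n : ℕ} (h : Nat.Coprime m n) :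
    vcount (m * n) = vcount m * vcount n := by
  rcases Nat.eq_zero_or_pos m with hm | hm
  · subst hm; simp at h; simp [h, vcount_one]
  rcases Nat.eq_zero_or_pos n with hn | hn
  · subst hn; simp at h; simp [h, vcount_one]
  have h2 : Nat.Coprime (m^2) (n^2) := Nat.Coprime.pow 2 2 h
  have e1 : ZMod ((m*n)^2) ≃+* ZMod (m^2) × ZMod (n^2) := by
    rw [mul_pow]; exact ZMod.chineseRemainder h2
  calc vcount (m*n) = Nat.card (Sol (ZMod ((m*n)^2))) := rfl
    _ = Nat.card (Sol (ZMod (m^2) × ZMod (n^2))) := Nat.card_congr (Sol.congr e1)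
    _ = Nat.card (Sol (ZMod (m^2)) × Sol (ZMod (n^2))) := Nat.card_congr Sol.prodEquiv
    _ = vcount m * vcount n := Nat.card_prod _ _

open Finset

variable {p : ℕ} [Fact p.Prime]

lemma hFchar (hp : p ≠ 2) : ringChar (ZMod p) ≠ 2 := by
  rw [ZMod.ringChar_zmod_n]; exact hp

lemma sum_quadChar_sq_add_one (hp : p ≠ 2) :
    ∑ t : ZMod p, quadraticChar (ZMod p) (t^2 + 1) = -1 := by
  classical
  have hF := hFchar hp
  set χ := quadraticChar (ZMod p) with hχ
  have key : ∑ t : ZMod p, χ (t^2 + 1)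
      = ∑ a : ZMod p, (χ a + 1) * χ (a + 1) := by
    rw [← Finset.sum_fiberwise_of_maps_to (g := fun t : ZMod p => t^2)
      (t := Finset.univ) (fun i _ => mem_univ _) (fun t => χ (t^2+1))]
    refine Finset.sum_congr rfl fun a _ => ?_
    have : ∀ t ∈ Finset.univ.filter (fun t : ZMod p => t^2 = a),
        χ (t^2 + 1) = χ (a + 1) := by
      intro t ht
      rw [(Finset.mem_filter.mp ht).2]
    rw [Finset.sum_congr rfl this, Finset.sum_const, nsmul_eq_mul]
    congr 1
    have := quadraticChar_card_sqrts hF a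
    rw [Set.toFinset_setOf] at this
    rw [this]
  rw [key]
  have expand : ∀ a : ZMod p, (χ a + 1) * χ (a + 1) = χ a * χ (a+1) + χ (a+1) := by
    intro a; ring
  rw [Finset.sum_congr rfl fun a _ => expand a, Finset.sum_add_distrib]
  have sum2 : ∑ a : ZMod p, χ (a + 1) = 0 := by
    have e := Fintype.sum_equiv (Equiv.addRight (1 : ZMod p)) (fun a : ZMod p => χ (a+1))
      (fun b => χ b) (fun a => rfl)
    exact e.trans (quadraticChar_sum_zero hF)
  have sum1 : ∑ a : ZMod p, χ a * χ (a + 1) = -1 := by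
    have h0 : ∑ a : ZMod p, χ a * χ (a + 1)
        = χ 0 * χ (0 + 1) + ∑ a ∈ Finset.univ.erase 0, χ a * χ (a + 1) :=
      (Finset.add_sum_erase _ _ (mem_univ 0)).symm
    rw [h0]
    have hχ0 : χ (0 : ZMod p) = 0 := by simp [hχ]
    rw [hχ0, zero_mul, zero_add]
    have step : ∀ a ∈ Finset.univ.erase (0 : ZMod p),
        χ a * χ (a + 1) = χ (1 + a⁻¹) := by
      intro a ha
      have ha0 : a ≠ 0 := Finset.ne_of_mem_erase ha
      rw [← map_mul]
      have : a * (a + 1) = a^2 * (1 + a⁻¹) := by field_simp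
      rw [this, map_mul]
      have : χ (a^2) = 1 := by
        rw [map_pow]; exact quadraticChar_sq_one ha0
      rw [this, one_mul]
    rw [Finset.sum_congr rfl step]
    have bij : ∑ a ∈ Finset.univ.erase (0 : ZMod p), χ (1 + a⁻¹)
        = ∑ a ∈ Finset.univ.erase (0 : ZMod p), χ (1 + a) := by
      refine Finset.sum_nbij' (fun a => a⁻¹) (fun a => a⁻¹) ?_ ?_ ?_ ?_ ?_
      · intro a ha
        exact Finset.mem_erase.mpr ⟨inv_ne_zero (Finset.ne_of_mem_erase ha), mem_univ _⟩
      · intro a ha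
        exact Finset.mem_erase.mpr ⟨inv_ne_zero (Finset.ne_of_mem_erase ha), mem_univ _⟩
      · intro a _; exact inv_inv a
      · intro a _; exact inv_inv a
      · intro a _; rfl
    rw [bij]
    have : ∑ a ∈ Finset.univ.erase (0 : ZMod p), χ (1 + a)
        = (∑ a : ZMod p, χ (1 + a)) - χ (1 + 0) := by
      rw [← Finset.add_sum_erase _ (fun a => χ (1+a)) (mem_univ 0)]
      ring
    rw [this]
    have : ∑ a : ZMod p, χ (1 + a) = 0 := by
      have e := Fintype.sum_equiv (Equiv.addLeft (1 : ZMod p)) (fun a : ZMod p => χ (1+a))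
        (fun b => χ b) (fun a => rfl)
      exact e.trans (quadraticChar_sum_zero hF)
    rw [this]; norm_num
  rw [sum1, sum2]; ring

lemma helper_sum_ite {α : Type*} [Fintype α] [DecidableEq α] (a : α) (A B : ℤ) :
    ∑ x : α, (if x = a then A else B) = A - B + (Fintype.card α) * B := by
  have h : ∀ x : α, (if x = a then A else B) = (if x = a then A - B else 0) + B := by
    intro x; by_cases h : x = a <;> simp [h]
  rw [Finset.sum_congr rfl fun x _ => h x, Finset.sum_add_distrib,
    Finset.sum_ite_eq' Finset.univ a (fun _ => A - B)]
  simp [Finset.card_univ, mul_comm]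

def solModEquiv (p : ℕ) :
    {t : ZMod p × ZMod p × ZMod p // t.1^2 + t.2.1^2 + t.2.2^2 = 0} ≃
    Σ xy : ZMod p × ZMod p, {z : ZMod p // z^2 = -(xy.1^2 + xy.2^2)} where
  toFun t := ⟨(t.1.1, t.1.2.1), ⟨t.1.2.2, by linear_combination t.2⟩⟩
  invFun s := ⟨(s.1.1, s.1.2, s.2.1), by linear_combination s.2.2⟩
  left_inv t := rfl
  right_inv s := rfl

lemma card_sol_mod_p (hp : p ≠ 2) :
    Nat.card {t : ZMod p × ZMod p × ZMod p // t.1^2 + t.2.1^2 + t.2.2^2 = 0} = p^2 := by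
  classical
  have hF := hFchar hp
  set χ := quadraticChar (ZMod p) with hχ
  rw [Nat.card_eq_fintype_card, Fintype.card_congr (solModEquiv p), Fintype.card_sigma]
  -- cast to ℤ
  have key : ∀ xy : ZMod p × ZMod p,
      (Fintype.card {z : ZMod p // z^2 = -(xy.1^2 + xy.2^2)} : ℤ)
        = χ (-(xy.1^2 + xy.2^2)) + 1 := by
    intro xy
    have := quadraticChar_card_sqrts hF (-(xy.1^2 + xy.2^2))
    rw [← this]
    congr 1
    rw [Set.toFinset_card]
    exact Fintype.card_congr (Equiv.subtypeEquivRight fun z => Iff.rfl)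
  have main : (∑ xy : ZMod p × ZMod p, (Fintype.card
      {z : ZMod p // z^2 = -(xy.1^2 + xy.2^2)} : ℤ)) = (p : ℤ)^2 := by
    rw [Finset.sum_congr rfl fun xy _ => key xy, Finset.sum_add_distrib]
    have hcard : ∑ _xy : ZMod p × ZMod p, (1 : ℤ) = (p:ℤ)^2 := by
      simp [Finset.card_univ, ZMod.card, sq]
    rw [hcard]
    have hzero : ∑ xy : ZMod p × ZMod p, χ (-(xy.1^2 + xy.2^2)) = 0 := by
      rw [Fintype.sum_prod_type]
      have inner : ∀ x : ZMod p, ∑ y : ZMod p, χ (-(x^2 + y^2))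
          = if x = 0 then χ (-1) * ((p:ℤ) - 1) else -χ (-1) := by
        intro x
        by_cases hx : x = 0
        · subst hx
          simp only [if_true]
          have : ∀ y : ZMod p, χ (-((0:ZMod p)^2 + y^2)) = χ (-1) * χ y ^ 2 := by
            intro y
            rw [show -((0:ZMod p)^2 + y^2) = (-1) * y^2 by ring, map_mul, map_pow]
          rw [Finset.sum_congr rfl fun y _ => this y, ← Finset.mul_sum]
          congr 1
          have : ∀ y : ZMod p, χ y ^ 2 = if y = 0 then 0 else 1 := by
            intro y
            by_cases hy : y = 0
            · simp [hy, hχ]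
            · simp [hy, quadraticChar_sq_one hy]; exact quadraticChar_dichotomy hy
          rw [Finset.sum_congr rfl fun y _ => this y, helper_sum_ite (0 : ZMod p) 0 1]
          rw [ZMod.card]; ring
        · simp only [hx, if_false]
          have e := Fintype.sum_equiv (Equiv.mulLeft₀ x (by exact hx))
            (fun t : ZMod p => χ (-(x^2 + (x*t)^2))) (fun y => χ (-(x^2 + y^2)))
            (fun t => rfl)
          rw [← e]
          have : ∀ t : ZMod p, χ (-(x^2 + (x*t)^2)) = χ (x^2) * (χ (-1) * χ (t^2+1)) := by
            intro t
            rw [← map_mul, ← map_mul]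
            congr 1
            ring
          rw [Finset.sum_congr rfl fun t _ => this t]
          have hx2 : χ (x^2) = 1 := by rw [map_pow]; exact quadraticChar_sq_one hx
          rw [Finset.sum_congr rfl fun t _ => by rw [hx2, one_mul], ← Finset.mul_sum,
            sum_quadChar_sq_add_one hp]
          ring
      rw [Finset.sum_congr rfl fun x _ => inner x,
        helper_sum_ite (0 : ZMod p) (χ (-1) * ((p:ℤ) - 1)) (-χ (-1))]
      rw [ZMod.card]
      ring
    rw [hzero]; ring
  have : ((∑ xy : ZMod p × ZMod p, Fintype.card
      {z : ZMod p // z^2 = -(xy.1^2 + xy.2^2)} : ℕ) : ℤ) = ((p^2 : ℕ) : ℤ) := by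
    push_cast
    exact main
  exact_mod_cast this
section Lift

variable (p : ℕ) [Fact p.Prime]

def lo (x : ZMod (p^2)) : ZMod p := (x.val : ZMod p)
def hi (x : ZMod (p^2)) : ZMod p := ((x.val / p : ℕ) : ZMod p)

abbrev K3 (p : ℕ) := ZMod p × ZMod p × ZMod p

def mval (s : K3 p) : ℕ := s.1.val^2 + s.2.1.val^2 + s.2.2.val^2

def kk (s : K3 p) : ZMod p := ((mval p s / p : ℕ) : ZMod p)

def Pred (st : K3 p × K3 p) : Prop :=
  st.1.1^2 + st.1.2.1^2 + st.1.2.2^2 = 0 ∧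
  kk p st.1 + 2*(st.1.1*st.2.1 + st.1.2.1*st.2.2.1 + st.1.2.2*st.2.2.2) = 0

instance : DecidablePred (Pred p) := fun st => by unfold Pred; infer_instance

variable {p}

lemma p2_ne_zero : NeZero (p^2) := ⟨pow_ne_zero 2 (NeZero.ne p)⟩

lemma rebuild (x : ZMod (p^2)) : ((x.val % p + p * (x.val / p) : ℕ) : ZMod (p^2)) = x := by
  haveI := p2_ne_zero (p := p)
  rw [Nat.mod_add_div]
  simp [ZMod.natCast_val, ZMod.cast_id]

lemma div_lt (x : ZMod (p^2)) : x.val / p < p := by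
  haveI := p2_ne_zero (p := p)
  have h := ZMod.val_lt x
  have hp : 0 < p := Nat.pos_of_ne_zero (NeZero.ne p)
  rw [Nat.div_lt_iff_lt_mul hp]
  calc x.val < p^2 := h
    _ = p * p := sq p

def divmodEquiv : ZMod (p^2) ≃ ZMod p × ZMod p where
  toFun x := (lo p x, hi p x)
  invFun ab := ((ab.1.val + p * ab.2.val : ℕ) : ZMod (p^2))
  left_inv x := by
    haveI := p2_ne_zero (p := p)
    simp only [lo, hi, ZMod.val_natCast]
    rw [Nat.mod_eq_of_lt (div_lt x)]
    exact rebuild x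
  right_inv ab := by
    haveI := p2_ne_zero (p := p)
    have hp : 0 < p := Nat.pos_of_ne_zero (NeZero.ne p)
    have h1 : ab.1.val + p * ab.2.val < p^2 := by
      have := ZMod.val_lt ab.1
      have := ZMod.val_lt ab.2
      nlinarith [ZMod.val_lt ab.1, ZMod.val_lt ab.2]
    have hval : (((ab.1.val + p * ab.2.val : ℕ) : ZMod (p^2))).val
        = ab.1.val + p * ab.2.val := by
      rw [ZMod.val_natCast, Nat.mod_eq_of_lt h1]
    ext
    · show lo p _ = ab.1
      rw [lo, hval]
      push_cast
      simp [ZMod.natCast_val, ZMod.cast_id, ZMod.natCast_self]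
    · show hi p _ = ab.2
      rw [hi, hval]
      have : (ab.1.val + p * ab.2.val) / p = ab.2.val := by
        rw [Nat.add_mul_div_left _ _ hp, Nat.div_eq_of_lt (ZMod.val_lt ab.1)]
        omega
      rw [this]
      simp [ZMod.natCast_val, ZMod.cast_id]

def shuffle : (ZMod p × ZMod p) × (ZMod p × ZMod p) × (ZMod p × ZMod p) ≃ K3 p × K3 p where
  toFun x := ((x.1.1, x.2.1.1, x.2.2.1), (x.1.2, x.2.1.2, x.2.2.2))
  invFun y := ((y.1.1, y.2.1), (y.1.2.1, y.2.2.1), (y.1.2.2, y.2.2.2))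
  left_inv x := rfl
  right_inv y := rfl

def D3 : ZMod (p^2) × ZMod (p^2) × ZMod (p^2) ≃ K3 p × K3 p :=
  (divmodEquiv.prodCongr (divmodEquiv.prodCongr divmodEquiv)).trans shuffle

lemma lo_natCast_mod (x : ZMod (p^2)) : ((x.val % p : ℕ) : ZMod p) = lo p x := by
  rw [lo, ZMod.natCast_mod]

lemma cond_iff (t : ZMod (p^2) × ZMod (p^2) × ZMod (p^2)) :
    t.1^2 + t.2.1^2 + t.2.2^2 = 0 ↔ Pred p (D3 t) := by
  haveI := p2_ne_zero (p := p)
  obtain ⟨x, y, z⟩ := t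
  have hD : D3 (x, y, z) = ((lo p x, lo p y, lo p z), (hi p x, hi p y, hi p z)) := rfl
  rw [hD]
  set a1 := x.val % p with ha1; set b1 := x.val / p with hb1
  set a2 := y.val % p with ha2; set b2 := y.val / p with hb2
  set a3 := z.val % p with ha3; set b3 := z.val / p with hb3
  set m := a1^2 + a2^2 + a3^2 with hm
  set c := a1*b1 + a2*b2 + a3*b3 with hc
  set d := b1^2 + b2^2 + b3^2 with hd
  have h1 : x^2 + y^2 + z^2 = ((m + p*(2*c) + p^2*d : ℕ) : ZMod (p^2)) := by
    have hx := (rebuild x).symm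
    have hy := (rebuild y).symm
    have hz := (rebuild z).symm
    rw [hm, hc, hd, ha1, ha2, ha3, hb1, hb2, hb3]
    conv_lhs => rw [hx, hy, hz]
    push_cast
    ring
  have h2 : (x^2 + y^2 + z^2 = 0) ↔ p^2 ∣ (m + p*(2*c) + p^2*d) := by
    rw [h1, ZMod.natCast_eq_zero_iff]
  have h3 : p^2 ∣ (m + p*(2*c) + p^2*d) ↔ p^2 ∣ (m + p*(2*c)) :=
    (Nat.dvd_add_iff_left (dvd_mul_right (p^2) d)).symm
  have hp0 : 0 < p := Nat.pos_of_ne_zero (NeZero.ne p)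
  have h4 : p^2 ∣ (m + p*(2*c)) ↔ (p ∣ m ∧ p ∣ (m/p + 2*c)) := by
    constructor
    · intro h
      have hpm : p ∣ m := by
        have hpp : p ∣ p^2 := dvd_pow_self p two_ne_zero
        have := dvd_trans hpp h
        exact (Nat.dvd_add_iff_left (dvd_mul_right p (2*c))).mpr this
      refine ⟨hpm, ?_⟩
      have heq : m + p*(2*c) = p * (m/p + 2*c) := by
        conv_rhs => rw [Nat.mul_add, Nat.mul_div_cancel' hpm]
      rw [heq, sq] at h
      exact (mul_dvd_mul_iff_left hp0.ne').mp h
    · rintro ⟨hpm, h⟩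
      have heq : m + p*(2*c) = p * (m/p + 2*c) := by
        conv_rhs => rw [Nat.mul_add, Nat.mul_div_cancel' hpm]
      rw [heq, sq]
      exact mul_dvd_mul_left p h
  have hcast1 : ((m : ℕ) : ZMod p) = (lo p x)^2 + (lo p y)^2 + (lo p z)^2 := by
    rw [hm]
    push_cast
    rw [ha1, ha2, ha3, lo_natCast_mod x, lo_natCast_mod y, lo_natCast_mod z]
  have h5 : p ∣ m ↔ ((lo p x)^2 + (lo p y)^2 + (lo p z)^2 = 0) := by
    rw [← hcast1, ZMod.natCast_eq_zero_iff m p]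
  have hmval : mval p (lo p x, lo p y, lo p z) = m := by
    simp only [mval, lo, ZMod.val_natCast, hm, ha1, ha2, ha3]
  have hcast2 : ((m/p + 2*c : ℕ) : ZMod p)
      = kk p (lo p x, lo p y, lo p z)
        + 2*((lo p x)*(hi p x) + (lo p y)*(hi p y) + (lo p z)*(hi p z)) := by
    rw [kk, hmval]
    push_cast
    rw [hc]
    push_cast
    rw [ha1, ha2, ha3, lo_natCast_mod x, lo_natCast_mod y, lo_natCast_mod z]
    rfl
  have h6 : p ∣ (m/p + 2*c) ↔ (kk p (lo p x, lo p y, lo p z)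
      + 2*((lo p x)*(hi p x) + (lo p y)*(hi p y) + (lo p z)*(hi p z)) = 0) := by
    rw [← hcast2, ZMod.natCast_eq_zero_iff]
  rw [h2, h3, h4, h5, h6]
  unfold Pred
  rfl

end Lift
section LinCount
variable {K : Type*} [Field K] [Fintype K] [DecidableEq K]

def linEquiv1 (a b c e : K) (ha : a ≠ 0) :
    {t : K × K × K // a*t.1 + b*t.2.1 + c*t.2.2 + e = 0} ≃ K × K where
  toFun t := t.1.2
  invFun u := ⟨(-a⁻¹*(b*u.1 + c*u.2 + e), u.1, u.2), by field_simp; ring⟩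
  left_inv t := by
    obtain ⟨⟨t1, t2, t3⟩, ht⟩ := t
    apply Subtype.ext
    simp only
    have h1 : t1 = -a⁻¹*(b*t2 + c*t3 + e) := by
      field_simp
      linear_combination ht
    rw [← h1]
  right_inv u := rfl

def swap12 : K × K × K ≃ K × K × K where
  toFun t := (t.2.1, t.1, t.2.2)
  invFun t := (t.2.1, t.1, t.2.2)
  left_inv t := rfl
  right_inv t := rfl

def swap13 : K × K × K ≃ K × K × K where
  toFun t := (t.2.2, t.2.1, t.1)
  invFun t := (t.2.2, t.2.1, t.1)
  left_inv t := rfl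
  right_inv t := rfl

lemma card_linear (a b c e : K) (h : ¬(a = 0 ∧ b = 0 ∧ c = 0)) :
    Fintype.card {t : K × K × K // a*t.1 + b*t.2.1 + c*t.2.2 + e = 0}
      = Fintype.card K ^ 2 := by
  by_cases ha : a = 0
  · by_cases hb : b = 0
    · have hc : c ≠ 0 := by
        intro hc; exact h ⟨ha, hb, hc⟩
      have e1 : {t : K × K × K // a*t.1 + b*t.2.1 + c*t.2.2 + e = 0}
          ≃ {t : K × K × K // c*t.1 + b*t.2.1 + a*t.2.2 + e = 0} :=
        Equiv.subtypeEquiv swap13 (fun t => by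
          obtain ⟨t1, t2, t3⟩ := t
          show a*t1 + b*t2 + c*t3 + e = 0 ↔ c*t3 + b*t2 + a*t1 + e = 0
          constructor <;> intro h' <;> linear_combination h')
      rw [Fintype.card_congr (e1.trans (linEquiv1 c b a e hc)), Fintype.card_prod, sq]
    · have e1 : {t : K × K × K // a*t.1 + b*t.2.1 + c*t.2.2 + e = 0}
          ≃ {t : K × K × K // b*t.1 + a*t.2.1 + c*t.2.2 + e = 0} :=
        Equiv.subtypeEquiv swap12 (fun t => by
          obtain ⟨t1, t2, t3⟩ := t
          show a*t1 + b*t2 + c*t3 + e = 0 ↔ b*t2 + a*t1 + c*t3 + e = 0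
          constructor <;> intro h' <;> linear_combination h')
      rw [Fintype.card_congr (e1.trans (linEquiv1 b a c e hb)), Fintype.card_prod, sq]
  · rw [Fintype.card_congr (linEquiv1 a b c e ha), Fintype.card_prod, sq]

end LinCount

def prodSubtypeSigma {α β : Type*} (P : α × β → Prop) :
    {x : α × β // P x} ≃ Σ a : α, {b : β // P (a, b)} where
  toFun x := ⟨x.1.1, x.1.2, x.2⟩
  invFun s := ⟨(s.1, s.2.1), s.2.2⟩
  left_inv x := rfl
  right_inv s := rfl

section Count
variable {p : ℕ} [Fact p.Prime]

lemma fiber_card (hp : p ≠ 2) (s : K3 p) :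
    Fintype.card {t : K3 p // Pred p (s, t)} =
      if s = 0 then p^3 else (if s.1^2 + s.2.1^2 + s.2.2^2 = 0 then p^2 else 0) := by
  classical
  by_cases hs : s = 0
  · subst hs
    rw [if_pos rfl]
    have hall : ∀ t : K3 p, Pred p (0, t) := by
      intro t
      constructor
      · simp
      · simp [kk, mval]
    rw [Fintype.card_congr (Equiv.subtypeUnivEquiv hall)]
    rw [Fintype.card_prod, Fintype.card_prod, ZMod.card]
    ring
  · rw [if_neg hs]
    by_cases hC : s.1^2 + s.2.1^2 + s.2.2^2 = 0
    · rw [if_pos hC]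
      have e1 : {t : K3 p // Pred p (s, t)} ≃
          {t : K3 p // (2*s.1)*t.1 + (2*s.2.1)*t.2.1 + (2*s.2.2)*t.2.2 + kk p s = 0} :=
        Equiv.subtypeEquivRight (fun t => by
          unfold Pred
          constructor
          · rintro ⟨-, h2⟩; linear_combination h2
          · intro h2; exact ⟨hC, by linear_combination h2⟩)
      have h2ne : (2 : ZMod p) ≠ 0 := Ring.two_ne_zero (hFchar hp)
      have hne : ¬(2*s.1 = 0 ∧ 2*s.2.1 = 0 ∧ 2*s.2.2 = 0) := by
        rintro ⟨h1', h2', h3'⟩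
        apply hs
        have e1' : s.1 = 0 := by
          rcases mul_eq_zero.mp h1' with h | h
          · exact absurd h h2ne
          · exact h
        have e2' : s.2.1 = 0 := by
          rcases mul_eq_zero.mp h2' with h | h
          · exact absurd h h2ne
          · exact h
        have e3' : s.2.2 = 0 := by
          rcases mul_eq_zero.mp h3' with h | h
          · exact absurd h h2ne
          · exact h
        exact Prod.ext e1' (Prod.ext e2' e3')
      rw [Fintype.card_congr e1, card_linear _ _ _ _ hne, ZMod.card]
    · rw [if_neg hC]
      rw [Fintype.card_eq_zero_iff]
      exact ⟨fun t => hC t.2.1⟩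

lemma vcount_odd_prime (hp : p ≠ 2) : vcount p + p^2 = p^4 + p^3 := by
  classical
  have h1 : vcount p = ∑ s : K3 p, Fintype.card {t : K3 p // Pred p (s, t)} := by
    rw [vcount, Nat.card_eq_fintype_card,
      Fintype.card_congr ((Equiv.subtypeEquiv D3 cond_iff).trans (prodSubtypeSigma (Pred p))),
      Fintype.card_sigma]
  rw [h1, Finset.sum_congr rfl fun s _ => fiber_card hp s]
  have hsum0 : ∑ s : K3 p, (if s = 0 then p^2 else 0) = p^2 := by
    rw [Finset.sum_ite_eq' Finset.univ (0 : K3 p) (fun _ => p^2)]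
    simp
  have hsum3 : ∑ s : K3 p, (if s = 0 then p^3 else 0) = p^3 := by
    rw [Finset.sum_ite_eq' Finset.univ (0 : K3 p) (fun _ => p^3)]
    simp
  have hsumC : ∑ s : K3 p, (if s.1^2 + s.2.1^2 + s.2.2^2 = 0 then p^2 else 0)
      = p^2 * p^2 := by
    rw [Finset.sum_ite, Finset.sum_const, Finset.sum_const_zero, add_zero, smul_eq_mul]
    congr 1
    have := card_sol_mod_p (p := p) hp
    rw [Nat.card_eq_fintype_card, Fintype.card_subtype] at this
    exact this
  have key : ∀ s : K3 p,
      (if s = 0 then p^3 else (if s.1^2 + s.2.1^2 + s.2.2^2 = 0 then p^2 else 0))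
        + (if s = 0 then p^2 else 0)
      = (if s.1^2 + s.2.1^2 + s.2.2^2 = 0 then p^2 else 0) + (if s = 0 then p^3 else 0) := by
    intro s
    by_cases hs : s = 0
    · subst hs
      have h0 : ((0:K3 p).1^2 + (0:K3 p).2.1^2 + (0:K3 p).2.2^2 : ZMod p) = 0 := by simp
      simp [h0, Nat.add_comm]
    · simp [hs]
  calc (∑ s : K3 p, (if s = 0 then p^3 else (if s.1^2 + s.2.1^2 + s.2.2^2 = 0 then p^2 else 0)))
        + p^2
      = ∑ s : K3 p, ((if s = 0 then p^3 else (if s.1^2 + s.2.1^2 + s.2.2^2 = 0 then p^2 else 0))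
          + (if s = 0 then p^2 else 0)) := by rw [Finset.sum_add_distrib, hsum0]
    _ = ∑ s : K3 p, ((if s.1^2 + s.2.1^2 + s.2.2^2 = 0 then p^2 else 0)
          + (if s = 0 then p^3 else 0)) := Finset.sum_congr rfl fun s _ => key s
    _ = p^2 * p^2 + p^3 := by rw [Finset.sum_add_distrib, hsumC, hsum3]
    _ = p^4 + p^3 := by ring

end Count
section Assemble

lemma vcount_prime_sq_le (p : ℕ) (hp : p.Prime) : vcount p ^ 2 ≤ p ^ 9 := by
  haveI : Fact p.Prime := ⟨hp⟩
  by_cases h2 : p = 2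
  · subst h2; rw [vcount_two]; norm_num
  · have h := vcount_odd_prime (p := p) h2
    have hple : vcount p ≤ p^4 + p^3 := by omega
    have hp3 : 3 ≤ p := by
      have := hp.two_le
      omega
    have key : (p+1)^2 ≤ p^3 := by nlinarith
    calc vcount p ^ 2 ≤ (p^4 + p^3)^2 := Nat.pow_le_pow_left hple 2
      _ = p^6 * (p+1)^2 := by ring
      _ ≤ p^6 * p^3 := Nat.mul_le_mul_left _ key
      _ = p ^ 9 := by ring

lemma vcount_sq_le : ∀ d : ℕ, Squarefree d → vcount d ^ 2 ≤ d ^ 9 := by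
  intro d
  induction d using Nat.strong_induction_on with
  | _ d ih =>
    intro hd
    rcases eq_or_ne d 1 with h1 | h1
    · subst h1; simp [vcount_one]
    have hd0 : d ≠ 0 := hd.ne_zero
    have hq : d.minFac.Prime := Nat.minFac_prime h1
    have hqd : d.minFac ∣ d := Nat.minFac_dvd d
    have hco : Nat.Coprime d.minFac (d / d.minFac) := by
      rw [Nat.Prime.coprime_iff_not_dvd hq]
      intro hdvd
      have hsq : d.minFac * d.minFac ∣ d := by
        calc d.minFac * d.minFac ∣ d.minFac * (d / d.minFac) :=
              mul_dvd_mul_left _ hdvd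
          _ = d := Nat.mul_div_cancel' hqd
      exact Nat.Prime.one_lt hq |>.ne' (Nat.isUnit_iff.mp (hd _ hsq))
    have hsplit : d = d.minFac * (d / d.minFac) := (Nat.mul_div_cancel' hqd).symm
    have hlt : d / d.minFac < d :=
      Nat.div_lt_self (Nat.pos_of_ne_zero hd0) hq.one_lt
    have hsf : Squarefree (d / d.minFac) := hd.squarefree_of_dvd (Nat.div_dvd_of_dvd hqd)
    calc vcount d ^ 2 = (vcount d.minFac * vcount (d / d.minFac))^2 := by
          rw [← vcount_mul hco, ← hsplit]
      _ = vcount d.minFac ^ 2 * vcount (d / d.minFac) ^ 2 := by ring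
      _ ≤ d.minFac ^ 9 * (d / d.minFac) ^ 9 :=
          Nat.mul_le_mul (vcount_prime_sq_le _ hq) (ih _ hlt hsf)
      _ = d ^ 9 := by rw [← mul_pow, ← hsplit]

noncomputable def ff (d : ℕ) : ℝ := (ArithmeticFunction.moebius d : ℝ) * vcount d / (d : ℝ)^6

lemma ff_zero : ff 0 = 0 := by simp [ff]

lemma ff_one : ff 1 = 1 := by simp [ff, vcount_one]

lemma ff_mul {m n : ℕ} (h : m.Coprime n) : ff (m*n) = ff m * ff n := by
  rcases eq_or_ne m 0 with rfl | hm
  · have : n = 1 := by simpa using h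
    subst this; simp [ff_zero, ff_one]
  rcases eq_or_ne n 0 with rfl | hn
  · have : m = 1 := by simpa using h
    subst this; simp [ff_zero, ff_one]
  unfold ff
  rw [ArithmeticFunction.isMultiplicative_moebius.map_mul_of_coprime h, vcount_mul h]
  push_cast
  ring

lemma ff_norm_le (d : ℕ) : ‖ff d‖ ≤ 1 / (d : ℝ)^((3:ℝ)/2) := by
  rcases eq_or_ne d 0 with rfl | hd0
  · rw [ff_zero]
    simp [Real.zero_rpow (by norm_num : ((3:ℝ)/2) ≠ 0)]
  by_cases hμ : ArithmeticFunction.moebius d = 0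
  · rw [ff]
    simp [hμ]
    positivity
  have hsf : Squarefree d := ArithmeticFunction.moebius_ne_zero_iff_squarefree.mp hμ
  have hdpos : (0:ℝ) < d := by
    have := Nat.pos_of_ne_zero hd0
    exact_mod_cast this
  have habsμ : |(ArithmeticFunction.moebius d : ℝ)| = 1 := by
    rw [ArithmeticFunction.moebius_apply_of_squarefree hsf]
    push_cast
    rw [abs_pow, abs_neg, abs_one, one_pow]
  have hv2 : (vcount d : ℝ)^2 ≤ (d:ℝ)^(9:ℕ) := by
    have := vcount_sq_le d hsf
    exact_mod_cast this
  have hvle : (vcount d : ℝ) ≤ (d:ℝ)^((9:ℝ)/2) := by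
    have h2 : ((d:ℝ)^((9:ℝ)/2))^2 = (d:ℝ)^(9:ℕ) := by
      rw [← Real.rpow_natCast ((d:ℝ)^((9:ℝ)/2)) 2, ← Real.rpow_mul hdpos.le]
      norm_num
    refine (pow_le_pow_iff_left₀ (by positivity) (by positivity) two_ne_zero).mp ?_
    rw [h2]; exact hv2
  have : ‖ff d‖ = (vcount d : ℝ) / (d:ℝ)^6 := by
    rw [ff, Real.norm_eq_abs, abs_div, abs_mul, habsμ, one_mul,
      abs_of_nonneg (by positivity : (0:ℝ) ≤ (vcount d : ℝ)),
      abs_of_nonneg (by positivity : (0:ℝ) ≤ ((d:ℝ))^6)]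
  rw [this]
  have hstep : (vcount d : ℝ) / (d:ℝ)^6 ≤ (d:ℝ)^((9:ℝ)/2) / (d:ℝ)^6 :=
    div_le_div_of_nonneg_right hvle (by positivity) |>.trans_eq rfl
  refine hstep.trans (le_of_eq ?_)
  rw [show ((d:ℝ)^6 : ℝ) = (d:ℝ)^((6:ℕ):ℝ) from (Real.rpow_natCast _ 6).symm]
  rw [← Real.rpow_sub hdpos]
  norm_num
  rw [Real.rpow_neg hdpos.le]

lemma ff_summable : Summable (fun d => ‖ff d‖) :=
  Summable.of_nonneg_of_le (fun _ => norm_nonneg _) ff_norm_le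
    ((Real.summable_one_div_nat_rpow).mpr (by norm_num))

lemma tsum_ff_pow (p : Nat.Primes) :
    ∑' e : ℕ, ff ((p:ℕ)^e) = 1 - (vcount (p:ℕ) : ℝ)/((p:ℕ):ℝ)^6 := by
  have hp : (p:ℕ).Prime := p.2
  have hvanish : ∀ e ∉ ({0,1} : Finset ℕ), ff ((p:ℕ)^e) = 0 := by
    intro e he
    simp only [Finset.mem_insert, Finset.mem_singleton, not_or] at he
    unfold ff
    rw [ArithmeticFunction.moebius_apply_prime_pow hp he.1, if_neg he.2]
    simp
  rw [tsum_eq_sum hvanish, Finset.sum_insert (by decide), Finset.sum_singleton,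
    pow_zero, pow_one, ff_one]
  unfold ff
  rw [ArithmeticFunction.moebius_apply_prime hp]
  push_cast
  ring

lemma euler_main : HasProd (fun p : Nat.Primes => 1 - (vcount (p:ℕ) : ℝ)/((p:ℕ):ℝ)^6)
    (∑' n, ff n) := by
  have h := EulerProduct.eulerProduct_hasProd (f := ff) ff_one
    (fun {m n} hc => ff_mul hc) ff_summable ff_zero
  have heq : (fun p : Nat.Primes => 1 - (vcount (p:ℕ) : ℝ)/((p:ℕ):ℝ)^6)
      = fun p : Nat.Primes => ∑' e : ℕ, ff ((p:ℕ)^e) :=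
    funext fun p => (tsum_ff_pow p).symm
  rw [heq]
  exact h

lemma vcount_odd_real {p : ℕ} (hp : p.Prime) (h2 : p ≠ 2) :
    (vcount p : ℝ) = (p:ℝ)^4 + (p:ℝ)^3 - (p:ℝ)^2 := by
  haveI : Fact p.Prime := ⟨hp⟩
  have h := vcount_odd_prime (p := p) h2
  have h' := congrArg (Nat.cast : ℕ → ℝ) h
  push_cast at h'
  linarith

lemma factor_eq {p : ℕ} (hp : p.Prime) (h2 : p ≠ 2) :
    1 - (vcount p : ℝ)/(p:ℝ)^6 = 1 - ((p:ℝ)^2 + (p:ℝ) - 1)/(p:ℝ)^4 := by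
  have hppos : (0:ℝ) < p := by exact_mod_cast hp.pos
  rw [vcount_odd_real hp h2]
  have hpne : (p:ℝ) ≠ 0 := hppos.ne'
  field_simp

lemma abs_log_one_sub_le {x : ℝ} (h0 : 0 ≤ x) (h2 : x ≤ 1/2) :
    |Real.log (1 - x)| ≤ 2*x := by
  have h1 : (0:ℝ) < 1 - x := by linarith
  have hlog_nonpos : Real.log (1 - x) ≤ 0 :=
    Real.log_nonpos (by linarith) (by linarith)
  rw [abs_of_nonpos hlog_nonpos]
  have hkey := Real.log_le_sub_one_of_pos (x := (1-x)⁻¹) (by positivity)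
  rw [Real.log_inv] at hkey
  have h3 : (1-x)⁻¹ ≤ 1 + 2*x := by
    rw [inv_eq_one_div, div_le_iff₀ h1]
    nlinarith
  linarith

end Assemble
section Final

open Real

abbrev OP := {p : ℕ // p.Prime ∧ p ≠ 2}

noncomputable def Tfac (q : OP) : ℝ := 1 - (((q:ℕ):ℝ)^2 + ((q:ℕ):ℝ) - 1)/((q:ℕ):ℝ)^4

lemma op_three_le (q : OP) : 3 ≤ (q : ℕ) := by
  have h2 := q.2.1.two_le
  have hne := q.2.2
  omega

lemma xq_nonneg (q : OP) : 0 ≤ (((q:ℕ):ℝ)^2 + ((q:ℕ):ℝ) - 1)/((q:ℕ):ℝ)^4 := by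
  have h3 : (3:ℝ) ≤ ((q:ℕ):ℝ) := by exact_mod_cast op_three_le q
  have : (0:ℝ) < ((q:ℕ):ℝ) := by linarith
  apply div_nonneg
  · nlinarith
  · positivity

lemma xq_le (q : OP) : (((q:ℕ):ℝ)^2 + ((q:ℕ):ℝ) - 1)/((q:ℕ):ℝ)^4 ≤ 2/((q:ℕ):ℝ)^2 := by
  have h3 : (3:ℝ) ≤ ((q:ℕ):ℝ) := by exact_mod_cast op_three_le q
  have hpos : (0:ℝ) < ((q:ℕ):ℝ) := by linarith
  rw [div_le_div_iff₀ (by positivity) (by positivity)]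
  have h4 : (((q:ℕ):ℝ))^3 ≤ (((q:ℕ):ℝ))^4 :=
    pow_le_pow_right₀ (by linarith) (by norm_num)
  nlinarith [h4, sq_nonneg (((q:ℕ):ℝ))]

lemma xq_le_half (q : OP) : (((q:ℕ):ℝ)^2 + ((q:ℕ):ℝ) - 1)/((q:ℕ):ℝ)^4 ≤ 1/2 := by
  have h3 : (3:ℝ) ≤ ((q:ℕ):ℝ) := by exact_mod_cast op_three_le q
  refine (xq_le q).trans ?_
  rw [div_le_div_iff₀ (by positivity) (by norm_num)]
  nlinarith

lemma Tfac_pos (q : OP) : 0 < Tfac q := by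
  have := xq_le_half q
  unfold Tfac
  linarith

lemma summable_aux : Summable (fun q : OP => 4/((q:ℕ):ℝ)^2) := by
  have h0 : Summable (fun n : ℕ => 4*(1/(n:ℝ)^2)) :=
    ((Real.summable_one_div_nat_pow).mpr one_lt_two).mul_left 4
  have h1 := h0.subtype {p : ℕ | p.Prime ∧ p ≠ 2}
  refine h1.congr fun q => ?_
  show 4*(1/((q.1:ℕ):ℝ)^2) = 4/((q.1:ℕ):ℝ)^2
  ring

lemma log_Tfac_summable : Summable (fun q : OP => Real.log (Tfac q)) := by
  refine Summable.of_norm_bounded summable_aux fun q => ?_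
  have hb := abs_log_one_sub_le (xq_nonneg q) (xq_le_half q)
  rw [Real.norm_eq_abs]
  unfold Tfac
  refine hb.trans ?_
  have h1 := xq_le q
  have h4 : 2*(2/((q:ℕ):ℝ)^2) = 4/((q:ℕ):ℝ)^2 := by ring
  linarith

lemma Tfac_multipliable : Multipliable Tfac := by
  have h := log_Tfac_summable.hasSum.rexp
  have heq : (rexp ∘ fun q : OP => Real.log (Tfac q)) = Tfac :=
    funext fun q => Real.exp_log (Tfac_pos q)
  rw [heq] at h
  exact h.multipliable

def two' : Nat.Primes := ⟨2, Nat.prime_two⟩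

def sOdd : Set Nat.Primes := {q | q ≠ two'}

lemma sOdd_compl : sOddᶜ = ({two'} : Set Nat.Primes) := by
  ext q
  simp [sOdd]

def eOP : OP ≃ ↥sOdd where
  toFun q := ⟨⟨q.1, q.2.1⟩, fun h => q.2.2 (congrArg Subtype.val h)⟩
  invFun r := ⟨(r.1 : ℕ), r.1.2, fun h => r.2 (Subtype.ext h)⟩
  left_inv q := rfl
  right_inv r := rfl

noncomputable def gfac (p : Nat.Primes) : ℝ := 1 - (vcount (p:ℕ) : ℝ)/((p:ℕ):ℝ)^6

lemma gfac_eOP (q : OP) : gfac (eOP q) = Tfac q := by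
  unfold gfac Tfac
  exact factor_eq q.2.1 q.2.2

lemma gfac_mult_sOdd : Multipliable (gfac ∘ (Subtype.val) : ↥sOdd → ℝ) := by
  rw [← Equiv.multipliable_iff eOP]
  exact Tfac_multipliable.congr fun q => (gfac_eOP q).symm

lemma gfac_mult_compl : Multipliable (gfac ∘ (Subtype.val) : ↥sOddᶜ → ℝ) := by
  have hfin : (sOddᶜ : Set Nat.Primes).Finite := by
    rw [sOdd_compl]; exact Set.finite_singleton _
  haveI := hfin.to_subtype
  exact Multipliable.of_finite

lemma gfac_two : gfac two' = 7/8 := by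
  unfold gfac
  have : ((two' : ℕ)) = 2 := rfl
  rw [this, vcount_two]
  norm_num

lemma tprod_compl_eq : (∏' x : ↥sOddᶜ, gfac x) = 7/8 := by
  have h : (∏' x : ↥sOddᶜ, gfac x) = ∏' x : ↥({two'} : Set Nat.Primes), gfac x := by
    rw [sOdd_compl]
  rw [h, tprod_singleton two' gfac, gfac_two]

lemma tprod_sOdd_eq : (∏' x : ↥sOdd, gfac x) = ∏' q : OP, Tfac q := by
  rw [← Equiv.tprod_eq eOP (fun x : ↥sOdd => gfac x)]
  exact tprod_congr fun q => gfac_eOP q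

lemma split_prod : (∏' p : Nat.Primes, gfac p) = (7/8) * ∏' q : OP, Tfac q := by
  rw [← Multipliable.tprod_mul_tprod_compl gfac_mult_sOdd gfac_mult_compl,
    tprod_compl_eq, tprod_sOdd_eq, mul_comm]

end Final

theorem euler_product_vcount :
    Summable (fun d : ℕ => |(ArithmeticFunction.moebius d : ℝ) * vcount d / (d : ℝ)^6|) ∧
    Multipliable (fun p : Nat.Primes => 1 - (vcount (p : ℕ) : ℝ) / ((p : ℕ) : ℝ)^6) ∧
    Multipliable (fun p : {p : ℕ // p.Prime ∧ p ≠ 2} =>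
      1 - (((p : ℕ) : ℝ)^2 + ((p : ℕ) : ℝ) - 1) / ((p : ℕ) : ℝ)^4) ∧
    (∑' d : ℕ, (ArithmeticFunction.moebius d : ℝ) * vcount d / (d : ℝ)^6) =
      (∏' p : Nat.Primes, (1 - (vcount (p : ℕ) : ℝ) / ((p : ℕ) : ℝ)^6)) ∧
    (∏' p : Nat.Primes, (1 - (vcount (p : ℕ) : ℝ) / ((p : ℕ) : ℝ)^6)) =
      (7/8) * ∏' p : {p : ℕ // p.Prime ∧ p ≠ 2},
        (1 - (((p : ℕ) : ℝ)^2 + ((p : ℕ) : ℝ) - 1) / ((p : ℕ) : ℝ)^4) := by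
  refine ⟨ff_summable, euler_main.multipliable, Tfac_multipliable, ?_, ?_⟩
  · exact euler_main.tprod_eq.symm
  · exact split_prod
end

section
/- For every positive integer Λ and every α ∈ [0,1), ∫_0^{1/2} t^α ( sin(πΛt) / sin(πt) )² dt < π^{1−α} ( Λ^{1−α} − (1/5)^{1−α} ) / (1 − α²). -/
open Real MeasureTheory

lemma my_abs_sin_nat_mul_le (n : ℕ) (x : ℝ) : |Real.sin (n * x)| ≤ n * |Real.sin x| := by
  induction n with
  | zero => simp
  | succ n ih =>
    have h : ((n:ℝ)+1) * x = n * x + x := by ring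
    push_cast
    rw [h, Real.sin_add]
    have h1 : |Real.sin (n*x) * Real.cos x| ≤ n * |Real.sin x| := by
      rw [abs_mul]
      calc |Real.sin (n*x)| * |Real.cos x| ≤ |Real.sin (n*x)| * 1 :=
            mul_le_mul_of_nonneg_left (Real.abs_cos_le_one x) (abs_nonneg _)
        _ = |Real.sin (n*x)| := mul_one _
        _ ≤ n * |Real.sin x| := ih
    have h2 : |Real.cos (n*x) * Real.sin x| ≤ |Real.sin x| := by
      rw [abs_mul]
      calc |Real.cos (n*x)| * |Real.sin x| ≤ 1 * |Real.sin x| :=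
            mul_le_mul_of_nonneg_right (Real.abs_cos_le_one _) (abs_nonneg _)
        _ = |Real.sin x| := one_mul _
    calc |Real.sin (n*x) * Real.cos x + Real.cos (n*x) * Real.sin x|
        ≤ |Real.sin (n*x) * Real.cos x| + |Real.cos (n*x) * Real.sin x| := abs_add_le _ _
      _ ≤ n * |Real.sin x| + |Real.sin x| := add_le_add h1 h2
      _ = (n + 1) * |Real.sin x| := by ring

lemma my_five_bound (β : ℝ) (hβ0 : 0 < β) (hβ1 : β ≤ 1) :
    β/2 < 1 - (1/5:ℝ) ^ β := by
  have hlog : 1 < Real.log 5 := by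
    rw [Real.lt_log_iff_exp_lt (by norm_num)]
    exact Real.exp_one_lt_d9.trans (by norm_num)
  have h5 : (1/5:ℝ) ^ β = Real.exp (β * -Real.log 5) := by
    rw [Real.rpow_def_of_pos (by norm_num), one_div, Real.log_inv, mul_comm]
  have hx0 : 0 < β * Real.log 5 := mul_pos hβ0 (by linarith)
  have hexp : Real.exp (β * -Real.log 5) ≤ 1/(1 + β * Real.log 5) := by
    have h1 : 1 + β * Real.log 5 ≤ Real.exp (β * Real.log 5) := by
      have := Real.add_one_le_exp (β * Real.log 5); linarith
    rw [show β * -Real.log 5 = -(β * Real.log 5) by ring, Real.exp_neg, inv_eq_one_div]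
    exact one_div_le_one_div_of_le (by linarith) h1
  have key : 1/(1 + β * Real.log 5) < 1 - β/2 := by
    rw [div_lt_iff₀ (by linarith)]
    have hβL : β * Real.log 5 ≤ Real.log 5 := by nlinarith
    nlinarith [mul_pos hβ0 (show (0:ℝ) < Real.log 5 * (2-β) - 1 by nlinarith)]
  rw [h5]; linarith

lemma my_key (α L u P F : ℝ) (ha0 : 0 ≤ α) (ha1 : α < 1) (hL : 1 ≤ L)
    (hu2 : u ≤ 2) (hP : 1 < P) (hF0 : 0 < F) (hF : (1-α)/2 < 1 - F) :
    u*L/(4*(1+α)) + u*(L-1)/(4*(1-α)) < P*(L-F)/((1+α)*(1-α)) := by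
  have h1 : (0:ℝ) < 1 - α := by linarith
  have h2 : (0:ℝ) < 1 + α := by linarith
  have hD : (0:ℝ) < (1+α)*(1-α) := mul_pos h2 h1
  have t : 2*u*L - u - u*α < 4*(P*(L-F)) := by
    have h3 : 0 ≤ (4*P - 2*u) * (L - 1) := mul_nonneg (by linarith) (by linarith)
    have h5 : 4*(1-F) ≤ 4*P*(1-F) := by
      nlinarith [mul_nonneg (show (0:ℝ) ≤ P - 1 by linarith) (show (0:ℝ) ≤ 1 - F by linarith)]
    have h6 : u*(1-α) ≤ 2*(1-α) := mul_le_mul_of_nonneg_right hu2 (le_of_lt h1)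
    nlinarith [h3, h5, h6]
  have heq : u*L/(4*(1+α)) + u*(L-1)/(4*(1-α)) = (2*u*L - u - u*α)/(4*((1+α)*(1-α))) := by
    field_simp
    ring
  have heq2 : P*(L-F)/((1+α)*(1-α)) = (4*(P*(L-F)))/(4*((1+α)*(1-α))) :=
    (mul_div_mul_left _ _ (by norm_num)).symm
  rw [heq, heq2]
  gcongr

theorem fejer_weighted_integral_bound (Λ : ℕ) (hΛ : 0 < Λ) (α : ℝ) (hα0 : 0 ≤ α) (hα1 : α < 1) :
    (∫ t in (0:ℝ)..(1/2), t ^ α * (Real.sin (π * Λ * t) / Real.sin (π * t)) ^ 2) <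
      π ^ (1 - α) * ((Λ : ℝ) ^ (1 - α) - (1/5 : ℝ) ^ (1 - α)) / (1 - α ^ 2) := by
  have hΛpos : (0:ℝ) < Λ := by exact_mod_cast hΛ
  have hΛ1 : (1:ℝ) ≤ Λ := by exact_mod_cast hΛ
  set c : ℝ := 1/(2*Λ) with hcdef
  have hc0 : 0 < c := by positivity
  have hc2 : c ≤ 1/2 := by
    rw [hcdef, div_le_div_iff₀ (by positivity) (by norm_num)]
    linarith
  set f : ℝ → ℝ := fun t => t ^ α * (Real.sin (π * Λ * t) / Real.sin (π * t)) ^ 2 with hfdef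
  -- pointwise bounds
  have hbd1 : ∀ t ∈ Set.Icc (0:ℝ) c, f t ≤ (Λ:ℝ)^2 * t ^ α := by
    rintro t ⟨ht0, htc⟩
    rcases eq_or_lt_of_le ht0 with h | h
    · rw [← h]
      have hf0 : f 0 = 0 := by simp [hfdef]
      rw [hf0]
      positivity
    · have hπt : 0 < π * t := by positivity
      have hπtlt : π * t < π := by
        nlinarith [Real.pi_pos, hc2, htc]
      have hsin : 0 < Real.sin (π*t) := Real.sin_pos_of_pos_of_lt_pi hπt hπtlt
      have habs : |Real.sin (π*Λ*t)| ≤ Λ * |Real.sin (π*t)| := by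
        have := my_abs_sin_nat_mul_le Λ (π*t)
        rwa [show (Λ:ℝ)*(π*t) = π*Λ*t by ring] at this
      have hsq : (Real.sin (π*Λ*t) / Real.sin (π*t))^2 ≤ (Λ:ℝ)^2 := by
        rw [div_pow, div_le_iff₀ (by positivity)]
        calc Real.sin (π*Λ*t)^2 = |Real.sin (π*Λ*t)|^2 := (sq_abs _).symm
          _ ≤ ((Λ:ℝ) * |Real.sin (π*t)|)^2 := by
              apply pow_le_pow_left₀ (abs_nonneg _) habs
          _ = (Λ:ℝ)^2 * Real.sin (π*t)^2 := by rw [mul_pow, sq_abs]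
      calc f t ≤ t ^ α * (Λ:ℝ)^2 :=
            mul_le_mul_of_nonneg_left hsq (Real.rpow_nonneg ht0 α)
        _ = (Λ:ℝ)^2 * t ^ α := mul_comm _ _
  have hbd2 : ∀ t ∈ Set.Icc c (1/2:ℝ), f t ≤ (1/4:ℝ) * t ^ (α-2) := by
    rintro t ⟨htc, ht2⟩
    have ht0 : 0 < t := lt_of_lt_of_le hc0 htc
    have hs : 2*t ≤ Real.sin (π*t) := by
      have := Real.mul_le_sin (x := π*t) (by positivity) (by nlinarith [Real.pi_pos])
      calc 2*t = 2/π * (π*t) := by field_simp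
        _ ≤ Real.sin (π*t) := this
    have hsp : 0 < Real.sin (π*t) := lt_of_lt_of_le (by positivity) hs
    have hsq : (Real.sin (π*Λ*t) / Real.sin (π*t))^2 ≤ 1/(4*t^2) := by
      rw [div_pow, div_le_div_iff₀ (pow_pos hsp 2) (by positivity)]
      have h1 : Real.sin (π*Λ*t)^2 ≤ 1 := Real.sin_sq_le_one _
      have h2 : (2*t)^2 ≤ Real.sin (π*t)^2 := by
        apply pow_le_pow_left₀ (by positivity) hs
      nlinarith [h1, h2, sq_nonneg (Real.sin (π*Λ*t))]
    have hre : t ^ α * (1/(4*t^2)) = (1/4:ℝ) * t ^ (α-2) := by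
      rw [Real.rpow_sub ht0, show (2:ℝ) = ((2:ℕ):ℝ) by norm_num, Real.rpow_natCast]
      field_simp
    calc f t ≤ t ^ α * (1/(4*t^2)) :=
          mul_le_mul_of_nonneg_left hsq (Real.rpow_nonneg ht0.le α)
      _ = (1/4:ℝ) * t ^ (α-2) := hre
  -- integrability
  have hint1g : IntervalIntegrable (fun t => (Λ:ℝ)^2 * t ^ α) volume 0 c :=
    (intervalIntegral.intervalIntegrable_rpow' (by linarith)).const_mul _
  have hmeas : Measurable f := by
    rw [hfdef]; fun_prop
  have hint1f : IntervalIntegrable f volume 0 c := by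
    apply hint1g.mono_fun hmeas.aestronglyMeasurable
    rw [Filter.EventuallyLE, ae_restrict_iff' measurableSet_uIoc]
    filter_upwards with t ht
    rw [Set.uIoc_of_le hc0.le] at ht
    have ht0 : 0 < t := ht.1
    have hfnn : 0 ≤ f t := by
      rw [hfdef]
      positivity
    have hgnn : 0 ≤ (Λ:ℝ)^2 * t ^ α := by positivity
    rw [Real.norm_eq_abs, Real.norm_eq_abs, abs_of_nonneg hfnn, abs_of_nonneg hgnn]
    exact hbd1 t ⟨ht0.le, ht.2⟩
  have hsinne : ∀ t ∈ Set.Icc c (1/2:ℝ), Real.sin (π*t) ≠ 0 := by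
    rintro t ⟨htc, ht2⟩
    have ht0 : 0 < t := lt_of_lt_of_le hc0 htc
    have : 0 < Real.sin (π*t) :=
      Real.sin_pos_of_pos_of_lt_pi (by positivity) (by nlinarith [Real.pi_pos])
    exact this.ne'
  have hint2f : IntervalIntegrable f volume c (1/2) := by
    apply ContinuousOn.intervalIntegrable
    rw [Set.uIcc_of_le hc2]
    apply ContinuousOn.mul
    · apply ContinuousOn.rpow_const continuousOn_id
      rintro t ⟨htc, _⟩
      exact Or.inl (lt_of_lt_of_le hc0 htc).ne'
    · exact (((Real.continuous_sin.comp (continuous_const.mul continuous_id)).continuousOn.div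
        (Real.continuous_sin.comp (continuous_const.mul continuous_id)).continuousOn
        hsinne).pow 2)
  have h0notin : (0:ℝ) ∉ Set.uIcc c (1/2:ℝ) := by
    rw [Set.uIcc_of_le hc2]
    rintro ⟨h1, _⟩
    exact absurd h1 (not_le.2 hc0)
  have hint2g : IntervalIntegrable (fun t => (1/4:ℝ) * t ^ (α-2)) volume c (1/2) :=
    (intervalIntegral.intervalIntegrable_rpow (Or.inr h0notin)).const_mul _
  -- split and bound
  have hsplit : (∫ t in (0:ℝ)..(1/2), f t) = (∫ t in (0:ℝ)..c, f t) + ∫ t in c..(1/2:ℝ), f t :=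
    (intervalIntegral.integral_add_adjacent_intervals hint1f hint2f).symm
  have hI1 : (∫ t in (0:ℝ)..c, f t) ≤ ∫ t in (0:ℝ)..c, (Λ:ℝ)^2 * t ^ α :=
    intervalIntegral.integral_mono_on hc0.le hint1f hint1g hbd1
  have hI2 : (∫ t in c..(1/2:ℝ), f t) ≤ ∫ t in c..(1/2:ℝ), (1/4:ℝ) * t ^ (α-2) :=
    intervalIntegral.integral_mono_on hc2 hint2f hint2g hbd2
  -- compute the two integrals
  have hC1 : (∫ t in (0:ℝ)..c, (Λ:ℝ)^2 * t ^ α) = (Λ:ℝ)^2 * (c ^ (α+1) / (α+1)) := by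
    rw [intervalIntegral.integral_const_mul, integral_rpow (Or.inl (by linarith)),
      Real.zero_rpow (by positivity : α+1 ≠ 0)]
    ring
  have hC2 : (∫ t in c..(1/2:ℝ), (1/4:ℝ) * t ^ (α-2))
      = (1/4:ℝ) * (((1/2:ℝ) ^ (α-1) - c ^ (α-1)) / (α-1)) := by
    rw [intervalIntegral.integral_const_mul,
      integral_rpow (Or.inr ⟨by intro h; apply absurd hα1; linarith [h], h0notin⟩)]
    rw [show α - 2 + 1 = α - 1 by ring]
  -- rpow algebra
  set L : ℝ := (Λ:ℝ) ^ (1-α) with hLdef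
  set u : ℝ := (2:ℝ) ^ (1-α) with hudef
  have hc_rpow : ∀ y : ℝ, c ^ y = (2:ℝ)^(-y) * (Λ:ℝ)^(-y) := by
    intro y
    rw [hcdef, one_div]
    calc ((2*(Λ:ℝ))⁻¹) ^ y = ((2*(Λ:ℝ)) ^ y)⁻¹ := Real.inv_rpow (by positivity) y
      _ = ((2:ℝ)^y * (Λ:ℝ)^y)⁻¹ := by rw [Real.mul_rpow (by norm_num) hΛpos.le]
      _ = ((2:ℝ)^y)⁻¹ * ((Λ:ℝ)^y)⁻¹ := by rw [mul_inv]
      _ = (2:ℝ)^(-y) * (Λ:ℝ)^(-y) := by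
          rw [← Real.rpow_neg (by norm_num : (0:ℝ) ≤ 2), ← Real.rpow_neg hΛpos.le]
  have e1 : (2:ℝ)^(-(α+1)) = u/4 := by
    rw [hudef, show -(α+1) = (1-α) - ((2:ℕ):ℝ) by push_cast; ring, Real.rpow_sub (by norm_num),
      Real.rpow_natCast]
    norm_num
  have e2 : (Λ:ℝ)^2 * (Λ:ℝ)^(-(α+1)) = L := by
    rw [hLdef, ← Real.rpow_natCast (Λ:ℝ) 2, ← Real.rpow_add hΛpos]
    congr 1
    push_cast; ring
  have e3 : (2:ℝ)^(-(α-1)) = u := by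
    rw [hudef]; congr 1; ring
  have e4 : (Λ:ℝ)^(-(α-1)) = L := by
    rw [hLdef]; congr 1; ring
  have hhalf : ((1:ℝ)/2) ^ (α-1) = u := by
    rw [one_div, Real.inv_rpow (by norm_num : (0:ℝ) ≤ 2), ← Real.rpow_neg (by norm_num : (0:ℝ) ≤ 2), e3]
  have hcL : (Λ:ℝ)^2 * (c ^ (α+1) / (α+1)) = u * L / (4*(1+α)) := by
    rw [hc_rpow, e1, ← e2]
    have h1 : α + 1 ≠ 0 := by positivity
    have h2 : (1:ℝ) + α ≠ 0 := by positivity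
    field_simp
    ring
  have hcU : (1/4:ℝ) * (((1/2:ℝ) ^ (α-1) - c ^ (α-1)) / (α-1))
      = u * (L-1) / (4*(1-α)) := by
    rw [hhalf, hc_rpow, e3, e4]
    have h1 : α - 1 ≠ 0 := by intro h; apply absurd hα1; linarith [h]
    have h2 : (1:ℝ) - α ≠ 0 := by intro h; apply absurd hα1; linarith [h]
    field_simp
    ring
  -- final inequality
  have hL1 : 1 ≤ L := by
    rw [hLdef]
    calc (1:ℝ) = (1:ℝ) ^ (1-α) := (Real.one_rpow _).symm
      _ ≤ (Λ:ℝ) ^ (1-α) := Real.rpow_le_rpow (by norm_num) hΛ1 (by linarith)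
  have hu2 : u ≤ 2 := by
    rw [hudef]
    calc (2:ℝ) ^ (1-α) ≤ (2:ℝ) ^ (1:ℝ) :=
          Real.rpow_le_rpow_of_exponent_le (by norm_num) (by linarith)
      _ = 2 := Real.rpow_one 2
  have hP : 1 < π ^ (1-α) :=
    (Real.one_lt_rpow_iff_of_pos Real.pi_pos).mpr
      (Or.inl ⟨by linarith [Real.pi_gt_three], by linarith⟩)
  have hF0 : (0:ℝ) < (1/5:ℝ) ^ (1-α) := Real.rpow_pos_of_pos (by norm_num) _
  have hF : (1-α)/2 < 1 - (1/5:ℝ) ^ (1-α) := my_five_bound (1-α) (by linarith) (by linarith)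
  have hkey := my_key α L u (π ^ (1-α)) ((1/5:ℝ) ^ (1-α)) hα0 hα1 hL1 hu2 hP hF0 hF
  have hrhs : π ^ (1-α) * ((Λ:ℝ) ^ (1-α) - (1/5:ℝ) ^ (1-α)) / (1 - α^2)
      = π ^ (1-α) * (L - (1/5:ℝ) ^ (1-α)) / ((1+α)*(1-α)) := by
    rw [hLdef, show (1:ℝ) - α^2 = (1+α)*(1-α) by ring]
  calc (∫ t in (0:ℝ)..(1/2), f t)
      = (∫ t in (0:ℝ)..c, f t) + ∫ t in c..(1/2:ℝ), f t := hsplit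
    _ ≤ ((Λ:ℝ)^2 * (c ^ (α+1) / (α+1))) + (1/4:ℝ) * (((1/2:ℝ) ^ (α-1) - c ^ (α-1)) / (α-1)) := by
        rw [← hC1, ← hC2]; exact add_le_add hI1 hI2
    _ = u * L / (4*(1+α)) + u * (L-1) / (4*(1-α)) := by rw [hcL, hcU]
    _ < π ^ (1-α) * (L - (1/5:ℝ) ^ (1-α)) / ((1+α)*(1-α)) := hkey
    _ = π ^ (1-α) * ((Λ:ℝ) ^ (1-α) - (1/5:ℝ) ^ (1-α)) / (1 - α^2) := hrhs.symm
end

section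
/- The function t ↦ 1/(sin t)² − 1/t² is monotone increasing on the interval (0, π/2]. -/
open Real

lemma aux_sin_lb : ∀ x : ℝ, 0 ≤ x → x - x ^ 3 / 6 ≤ Real.sin x := by
  intro x hx
  have hmono : MonotoneOn (fun y : ℝ => Real.sin y - y + y ^ 3 / 6) (Set.Ici 0) := by
    apply monotoneOn_of_deriv_nonneg (convex_Ici 0)
    · fun_prop
    · intro y hy
      apply DifferentiableAt.differentiableWithinAt
      fun_prop
    · intro y hy
      have hd : HasDerivAt (fun y : ℝ => Real.sin y - y + y ^ 3 / 6)
          (Real.cos y - 1 + 3 * y ^ 2 / 6) y := by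
        have := ((Real.hasDerivAt_sin y).sub (hasDerivAt_id y)).add
          (((hasDerivAt_pow 3 y)).div_const 6)
        simp only [Pi.add_def, Pi.sub_def, Pi.inv_def, Pi.pow_apply, id] at this
        simpa using this
      rw [hd.deriv]
      nlinarith [Real.one_sub_sq_div_two_le_cos (x := y)]
  have := hmono (Set.self_mem_Ici) (Set.mem_Ici.mpr hx) hx
  simp at this
  linarith

lemma aux_cos_ub : ∀ x : ℝ, 0 ≤ x → Real.cos x ≤ 1 - x ^ 2 / 2 + x ^ 4 / 24 := by
  intro x hx
  have hmono : MonotoneOn (fun y : ℝ => 1 - y ^ 2 / 2 + y ^ 4 / 24 - Real.cos y) (Set.Ici 0) := by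
    apply monotoneOn_of_deriv_nonneg (convex_Ici 0)
    · fun_prop
    · intro y hy
      apply DifferentiableAt.differentiableWithinAt
      fun_prop
    · intro y hy
      have hy0 : (0:ℝ) ≤ y := le_of_lt (by simpa using hy)
      have hd : HasDerivAt (fun y : ℝ => 1 - y ^ 2 / 2 + y ^ 4 / 24 - Real.cos y)
          (0 - 2 * y / 2 + 4 * y ^ 3 / 24 - -Real.sin y) y := by
        have := (((hasDerivAt_const y (1:ℝ)).sub ((hasDerivAt_pow 2 y).div_const 2)).add
          ((hasDerivAt_pow 4 y).div_const 24)).sub (Real.hasDerivAt_cos y)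
        simp only [Pi.add_def, Pi.sub_def, Pi.inv_def, Pi.pow_apply, id] at this
        simpa using this
      rw [hd.deriv]
      have := aux_sin_lb y hy0
      nlinarith
  have := hmono (Set.self_mem_Ici) (Set.mem_Ici.mpr hx) hx
  simp at this
  linarith

lemma aux_key : ∀ t : ℝ, 0 < t → t ≤ π / 2 → t ^ 3 * Real.cos t ≤ Real.sin t ^ 3 := by
  intro t ht hpi
  have h1 := aux_sin_lb t ht.le
  have h2 := aux_cos_ub t ht.le
  have hlt : t ≤ 1.6 := by nlinarith [Real.pi_lt_d2]
  have h0 : 0 ≤ t - t ^ 3 / 6 := by nlinarith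
  have h3 : (t - t ^ 3 / 6) ^ 3 ≤ Real.sin t ^ 3 := by
    exact pow_le_pow_left₀ h0 h1 3
  have hA : t ^ 3 * Real.cos t ≤ t ^ 3 * (1 - t ^ 2 / 2 + t ^ 4 / 24) :=
    mul_le_mul_of_nonneg_left h2 (pow_nonneg ht.le 3)
  have h9 : (0:ℝ) ≤ 9 - t ^ 2 := by nlinarith
  have hB : t ^ 3 * (1 - t ^ 2 / 2 + t ^ 4 / 24) ≤ (t - t ^ 3 / 6) ^ 3 := by
    nlinarith [mul_nonneg (pow_nonneg ht.le 7) h9]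
  linarith

theorem csc_sq_sub_inv_sq_monotone :
    MonotoneOn (fun t : ℝ => 1 / (Real.sin t) ^ 2 - 1 / t ^ 2) (Set.Ioc 0 (π / 2)) := by
  have hpi : (0:ℝ) < π := Real.pi_pos
  have hsin : ∀ t : ℝ, 0 < t → t ≤ π / 2 → 0 < Real.sin t := by
    intro t h1 h2
    exact Real.sin_pos_of_pos_of_lt_pi h1 (by linarith)
  have hderiv : ∀ t : ℝ, 0 < t → t ≤ π / 2 →
      HasDerivAt (fun t : ℝ => 1 / (Real.sin t) ^ 2 - 1 / t ^ 2)
        (-(2 * Real.sin t ^ 1 * Real.cos t) / (Real.sin t ^ 2) ^ 2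
          - -(2 * t ^ 1) / (t ^ 2) ^ 2) t := by
    intro t h1 h2
    have hs := (hsin t h1 h2).ne'
    have ht0 := h1.ne'
    have d1 : HasDerivAt (fun t : ℝ => (Real.sin t ^ 2)⁻¹)
        (-(2 * Real.sin t ^ 1 * Real.cos t) / (Real.sin t ^ 2) ^ 2) t := by
      have := ((Real.hasDerivAt_sin t).pow 2).inv (pow_ne_zero 2 hs)
      simp only [Pi.add_def, Pi.sub_def, Pi.inv_def, Pi.pow_apply, id] at this
      simpa using this
    have d2 : HasDerivAt (fun t : ℝ => (t ^ 2)⁻¹) (-(2 * t ^ 1) / (t ^ 2) ^ 2) t := by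
      have := (hasDerivAt_pow 2 t).inv (pow_ne_zero 2 ht0)
      simp only [Pi.add_def, Pi.sub_def, Pi.inv_def, Pi.pow_apply, id] at this
      simpa using this
    have := d1.sub d2
    simp only [Pi.add_def, Pi.sub_def, Pi.inv_def, Pi.pow_apply, id] at this
    simpa [one_div] using this
  apply monotoneOn_of_deriv_nonneg (convex_Ioc 0 (π / 2))
  · intro t ht
    exact ((hderiv t ht.1 ht.2).continuousAt).continuousWithinAt
  · rw [interior_Ioc]
    intro t ht
    exact (hderiv t ht.1 ht.2.le).differentiableAt.differentiableWithinAt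
  · rw [interior_Ioc]
    intro t ht
    rw [(hderiv t ht.1 ht.2.le).deriv]
    have hs := hsin t ht.1 ht.2.le
    have hkey := aux_key t ht.1 ht.2.le
    have h1 : -(2 * t ^ 1) / (t ^ 2) ^ 2
        ≤ -(2 * Real.sin t ^ 1 * Real.cos t) / (Real.sin t ^ 2) ^ 2 := by
      rw [div_le_div_iff₀ (pow_pos (pow_pos ht.1 2) 2) (pow_pos (pow_pos hs 2) 2)]
      nlinarith [mul_le_mul_of_nonneg_left hkey
        (le_of_lt (mul_pos (mul_pos two_pos ht.1) hs))]
    linarith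
end

section
/- The function f(α) = 2^{−α} + 0.3(α − 1) − (π/5)^{1−α} / (1 + α) is decreasing on the interval [0,1]; since f(1) = 0, it follows that f(α) ≥ 0 for all α ∈ [0,1]. -/
set_option maxHeartbeats 1000000
open Real

private lemma log_pi5_bounds : Real.log (π / 5) < -0.4642 ∧ -0.4651 < Real.log (π / 5) := by
  have hπ1 := Real.pi_gt_d6
  have hπ2 := Real.pi_lt_d6
  obtain ⟨y, hy⟩ : ∃ y : ℝ, y = 2 * π / 5 - 1 := ⟨_, rfl⟩
  have hy1 : (0.2566368 : ℝ) < y := by rw [hy]; linarith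
  have hy2 : y < (0.2566372 : ℝ) := by rw [hy]; linarith
  have hy0 : (0 : ℝ) < y := by linarith
  have hxeq : (1 : ℝ) - 2 * π / 5 = -y := by rw [hy]; ring
  have habs : |(1 : ℝ) - 2 * π / 5| < 1 := by
    rw [abs_lt]; constructor <;> nlinarith
  have h := Real.abs_log_sub_add_sum_range_le habs 5
  rw [hxeq] at h
  have h2pi : (1 : ℝ) - -y = 2 * π / 5 := by rw [hy]; ring
  rw [h2pi, show |(-y)| = y by rw [abs_neg]; exact abs_of_pos hy0] at h
  rw [Finset.sum_range_succ, Finset.sum_range_succ, Finset.sum_range_succ,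
    Finset.sum_range_succ, Finset.sum_range_succ, Finset.sum_range_zero, abs_le] at h
  norm_num at h
  ring_nf at h
  rw [show π * (2/5) = 2*π/5 from by ring, show y ^ 6 * (1 - y)⁻¹ = y ^ 6 / (1 - y) from (div_eq_mul_inv _ _).symm] at h
  -- power bounds
  have p2l : (0.0658624 : ℝ) < y ^ 2 := by nlinarith
  have p2h : y ^ 2 < (0.0658627 : ℝ) := by nlinarith
  have p3l : (0.0169027 : ℝ) < y ^ 3 := by
    have h' := mul_lt_mul'' hy1 p2l (by norm_num) (by norm_num)
    calc (0.0169027 : ℝ) < 0.2566368 * 0.0658624 := by norm_num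
      _ < y * y ^ 2 := h'
      _ = y ^ 3 := by ring
  have p3h : y ^ 3 < (0.0169029 : ℝ) := by
    have h' := mul_lt_mul'' hy2 p2h hy0.le (pow_pos hy0 2).le
    calc y ^ 3 = y * y ^ 2 := by ring
      _ < 0.2566372 * 0.0658627 := h'
      _ < (0.0169029 : ℝ) := by norm_num
  have p4l : (0.0043378 : ℝ) < y ^ 4 := by
    have h' := mul_lt_mul'' hy1 p3l (by norm_num) (by norm_num)
    calc (0.0043378 : ℝ) < 0.2566368 * 0.0169027 := by norm_num
      _ < y * y ^ 3 := h'
      _ = y ^ 4 := by ring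
  have p4h : y ^ 4 < (0.0043380 : ℝ) := by
    have h' := mul_lt_mul'' hy2 p3h hy0.le (pow_pos hy0 3).le
    calc y ^ 4 = y * y ^ 3 := by ring
      _ < 0.2566372 * 0.0169029 := h'
      _ < (0.0043380 : ℝ) := by norm_num
  have p5l : (0.0011132 : ℝ) < y ^ 5 := by
    have h' := mul_lt_mul'' hy1 p4l (by norm_num) (by norm_num)
    calc (0.0011132 : ℝ) < 0.2566368 * 0.0043378 := by norm_num
      _ < y * y ^ 4 := h'
      _ = y ^ 5 := by ring
  have p5h : y ^ 5 < (0.0011134 : ℝ) := by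
    have h' := mul_lt_mul'' hy2 p4h hy0.le (pow_pos hy0 4).le
    calc y ^ 5 = y * y ^ 4 := by ring
      _ < 0.2566372 * 0.0043380 := h'
      _ < (0.0011134 : ℝ) := by norm_num
  have p6h : y ^ 6 < (0.0002858 : ℝ) := by
    have h' := mul_lt_mul'' hy2 p5h hy0.le (pow_pos hy0 5).le
    calc y ^ 6 = y * y ^ 5 := by ring
      _ < 0.2566372 * 0.0011134 := h'
      _ < (0.0002858 : ℝ) := by norm_num
  have heps : y ^ 6 / (1 - y) < 0.000385 := by
    rw [div_lt_iff₀ (by linarith)]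
    nlinarith [p6h]
  have hepsl : (0 : ℝ) < y ^ 6 / (1 - y) := div_pos (pow_pos hy0 6) (by linarith)
  have hlub : Real.log (2 * π / 5) < 0.2288636 := by linarith [h.2]
  have hllb : (0.2280926 : ℝ) < Real.log (2 * π / 5) := by linarith [h.1]
  have hsplit : Real.log (π / 5) = Real.log (2 * π / 5) - Real.log 2 := by
    rw [← Real.log_div (by positivity) (by norm_num)]
    congr 1
    ring
  have hl2a := Real.log_two_gt_d9
  have hl2b := Real.log_two_lt_d9
  constructor
  · rw [hsplit]; linarith
  · rw [hsplit]; linarith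

private lemma exp_cubic_lb {u : ℝ} (h1 : -1 ≤ u) (h2 : u ≤ 0) :
    1 + u + u ^ 2 / 2 + u ^ 3 / 6 ≤ Real.exp u := by
  have habs : |u| ≤ 1 := abs_le.2 ⟨h1, h2.trans zero_le_one⟩
  have h := Real.exp_bound habs (n := 5) (by norm_num)
  rw [abs_of_nonpos h2, abs_le] at h
  rw [Finset.sum_range_succ, Finset.sum_range_succ, Finset.sum_range_succ,
    Finset.sum_range_succ, Finset.sum_range_succ, Finset.sum_range_zero] at h
  norm_num [Nat.factorial] at h
  have h5 : (-u) ^ 5 ≤ (-u) ^ 4 :=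
    pow_le_pow_of_le_one (by linarith) (by linarith) (by norm_num)
  nlinarith [h.1, h5]

private lemma exp_quad_ub {u : ℝ} (h1 : -1 ≤ u) (h2 : u ≤ 0) :
    Real.exp u ≤ 1 + u + u ^ 2 / 2 := by
  have habs : |u| ≤ 1 := abs_le.2 ⟨h1, h2.trans zero_le_one⟩
  have h := Real.exp_bound habs (n := 5) (by norm_num)
  rw [abs_of_nonpos h2, abs_le] at h
  rw [Finset.sum_range_succ, Finset.sum_range_succ, Finset.sum_range_succ,
    Finset.sum_range_succ, Finset.sum_range_succ, Finset.sum_range_zero] at h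
  norm_num [Nat.factorial] at h
  have h4 : (-u) ^ 4 ≤ (-u) ^ 3 :=
    pow_le_pow_of_le_one (by linarith) (by linarith) (by norm_num)
  have h5 : (-u) ^ 5 ≤ (-u) ^ 3 :=
    pow_le_pow_of_le_one (by linarith) (by linarith) (by norm_num)
  nlinarith [h.2, h4, h5]


private lemma key {x : ℝ} (h0 : 0 ≤ x) (h1 : x ≤ 1) :
    (2:ℝ) ^ (-x) * Real.log 2 * (-1) + 0.3 * 1 -
      ((π / 5 : ℝ) ^ (1 - x) * Real.log (π / 5) * (-1) * (1 + x) - (π / 5 : ℝ) ^ (1 - x) * 1) /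
        (1 + x) ^ 2 < 0 := by
  have hc1 := Real.log_two_gt_d9
  have hc2 := Real.log_two_lt_d9
  obtain ⟨hL2, hL1⟩ := log_pi5_bounds
  have ht : (0:ℝ) < π / 5 := by positivity
  set c := Real.log 2 with hcdef
  set L := Real.log (π / 5) with hLdef
  set A := (2:ℝ) ^ (-x) with hAdef
  set B := (π / 5 : ℝ) ^ (1 - x) with hBdef
  have hA : A = Real.exp (c * (-x)) := Real.rpow_def_of_pos two_pos _
  have hB : B = Real.exp (L * (1 - x)) := Real.rpow_def_of_pos ht _
  have hApos : 0 < A := Real.rpow_pos_of_pos two_pos _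
  have hBpos : 0 < B := Real.rpow_pos_of_pos ht _
  have hd : (0:ℝ) < (1 + x) ^ 2 := by positivity
  -- exp bounds
  have hu1 : (-1:ℝ) ≤ c * (-x) := by nlinarith
  have hu2 : c * (-x) ≤ 0 := by nlinarith
  have hAlb : 1 + c * (-x) + (c * (-x)) ^ 2 / 2 + (c * (-x)) ^ 3 / 6 ≤ A := by
    rw [hA]; exact exp_cubic_lb hu1 hu2
  have hv1 : (-1:ℝ) ≤ L * (1 - x) := by nlinarith
  have hv2 : L * (1 - x) ≤ 0 := by nlinarith
  have hBub : B ≤ 1 + L * (1 - x) + (L * (1 - x)) ^ 2 / 2 := by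
    rw [hB]; exact exp_quad_ub hv1 hv2
  -- numeric polynomial bounds
  have hcsq : (0.4804528 : ℝ) ≤ c ^ 2 := by nlinarith
  have hccube : c ^ 3 ≤ (0.3330252 : ℝ) := by nlinarith
  have hLsq : L ^ 2 ≤ (0.21631801 : ℝ) := by nlinarith
  have hP : 1 - 0.6931472 * x + 0.2402264 * x ^ 2 - 0.0555042 * x ^ 3 ≤ A := by
    refine le_trans ?_ hAlb
    have e1 : c * x ≤ 0.6931471808 * x := mul_le_mul_of_nonneg_right hc2.le h0
    have e2 : 0.4804528 * x ^ 2 ≤ c ^ 2 * x ^ 2 :=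
      mul_le_mul_of_nonneg_right hcsq (sq_nonneg x)
    have e3 : c ^ 3 * x ^ 3 ≤ 0.3330252 * x ^ 3 :=
      mul_le_mul_of_nonneg_right hccube (pow_nonneg h0 3)
    nlinarith [e1, e2, e3, pow_nonneg h0 3, sq_nonneg x]
  have hPpos : (0:ℝ) < 1 - 0.6931472 * x + 0.2402264 * x ^ 2 - 0.0555042 * x ^ 3 := by
    nlinarith [sq_nonneg x, pow_nonneg h0 3, mul_nonneg h0 (sub_nonneg.2 h1)]
  have hcA : 0.6931471 * (1 - 0.6931472 * x + 0.2402264 * x ^ 2 - 0.0555042 * x ^ 3) ≤ c * A := by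
    have := mul_le_mul hc1.le hP hPpos.le (by linarith : (0:ℝ) ≤ c)
    linarith
  have hM0 : (0:ℝ) < 1 + L * (1 + x) := by nlinarith
  have hM1 : 1 + L * (1 + x) ≤ 1 - 0.4642 * (1 + x) := by nlinarith
  have hQ : B ≤ 1 - 0.4642 * (1 - x) + 0.10816 * (1 - x) ^ 2 := by
    have e1 : L * (1 - x) ≤ -0.4642 * (1 - x) :=
      mul_le_mul_of_nonneg_right hL2.le (by linarith)
    have e2 : L ^ 2 * (1 - x) ^ 2 ≤ 0.21631801 * (1 - x) ^ 2 :=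
      mul_le_mul_of_nonneg_right hLsq (sq_nonneg (1 - x))
    nlinarith [e1, e2, sq_nonneg (1 - x)]
  have hQpos : (0:ℝ) < 1 - 0.4642 * (1 - x) + 0.10816 * (1 - x) ^ 2 := by
    nlinarith [sq_nonneg (1 - x)]
  have hBM : B * (1 + L * (1 + x)) ≤
      (1 - 0.4642 * (1 - x) + 0.10816 * (1 - x) ^ 2) * (1 - 0.4642 * (1 + x)) :=
    mul_le_mul hQ hM1 hM0.le hQpos.le
  have hG : (1 - 0.4642 * (1 - x) + 0.10816 * (1 - x) ^ 2) * (1 - 0.4642 * (1 + x)) <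
      (0.6931471 * (1 - 0.6931472 * x + 0.2402264 * x ^ 2 - 0.0555042 * x ^ 3) - 0.3) *
        (1 + x) ^ 2 := by
    nlinarith [sq_nonneg x, sq_nonneg (1 - x), mul_nonneg h0 (sub_nonneg.2 h1),
      mul_nonneg (mul_nonneg h0 h0) (sub_nonneg.2 h1),
      mul_nonneg (mul_nonneg h0 h0) (mul_nonneg h0 (sub_nonneg.2 h1)),
      mul_nonneg (mul_nonneg h0 (sub_nonneg.2 h1)) (sub_nonneg.2 h1)]
  have hfin : (0.6931471 * (1 - 0.6931472 * x + 0.2402264 * x ^ 2 - 0.0555042 * x ^ 3) - 0.3) *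
      (1 + x) ^ 2 ≤ (c * A - 0.3) * (1 + x) ^ 2 :=
    mul_le_mul_of_nonneg_right (by linarith) hd.le
  have hmain : B * (1 + L * (1 + x)) < (c * A - 0.3) * (1 + x) ^ 2 := by linarith
  have heq : A * c * (-1) + 0.3 * 1 -
      (B * L * (-1) * (1 + x) - B * 1) / (1 + x) ^ 2
      = (0.3 - c * A) + B * (1 + L * (1 + x)) / (1 + x) ^ 2 := by
    field_simp
    ring
  rw [heq]
  have hdiv : B * (1 + L * (1 + x)) / (1 + x) ^ 2 < c * A - 0.3 := (div_lt_iff₀ hd).mpr hmain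
  linarith

private lemma hasD (x : ℝ) (hx : -1 < x) :
    HasDerivAt (fun α : ℝ => (2:ℝ) ^ (-α) + 0.3 * (α - 1) - (π / 5) ^ (1 - α) / (1 + α))
      ((2:ℝ) ^ (-x) * Real.log 2 * (-1) + 0.3 * 1 -
        ((π / 5 : ℝ) ^ (1 - x) * Real.log (π / 5) * (-1) * (1 + x) - (π / 5 : ℝ) ^ (1 - x) * 1) /
          (1 + x) ^ 2) x := by
  have ht : (0:ℝ) < π / 5 := by positivity
  have h2 : HasDerivAt (fun α : ℝ => (2:ℝ) ^ (-α)) ((2:ℝ) ^ (-x) * Real.log 2 * (-1)) x :=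
    (Real.hasStrictDerivAt_const_rpow two_pos (-x)).hasDerivAt.comp x (hasDerivAt_neg x)
  have h3 : HasDerivAt (fun α : ℝ => 0.3 * (α - 1)) (0.3 * 1) x :=
    ((hasDerivAt_id x).sub_const 1).const_mul 0.3
  have h4 : HasDerivAt (fun α : ℝ => (π / 5 : ℝ) ^ (1 - α))
      ((π / 5 : ℝ) ^ (1 - x) * Real.log (π / 5) * (-1)) x :=
    (Real.hasStrictDerivAt_const_rpow ht (1 - x)).hasDerivAt.comp x ((hasDerivAt_id x).const_sub 1)
  have h5 : HasDerivAt (fun α : ℝ => 1 + α) 1 x := (hasDerivAt_id x).const_add 1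
  have h6 := h4.div h5 (by linarith : (1:ℝ) + x ≠ 0)
  exact (h2.add h3).sub h6

theorem auxiliary_function_decreasing_nonneg :
    StrictAntiOn (fun α : ℝ => (2:ℝ) ^ (-α) + 0.3 * (α - 1) - (π / 5) ^ (1 - α) / (1 + α))
      (Set.Icc 0 1) ∧
    ((2:ℝ) ^ (-(1:ℝ)) + 0.3 * ((1:ℝ) - 1) - (π / 5) ^ ((1:ℝ) - 1) / (1 + 1) = 0) ∧
    (∀ α ∈ Set.Icc (0:ℝ) 1,
      0 ≤ (2:ℝ) ^ (-α) + 0.3 * (α - 1) - (π / 5) ^ (1 - α) / (1 + α)) := by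
  have hanti : StrictAntiOn
      (fun α : ℝ => (2:ℝ) ^ (-α) + 0.3 * (α - 1) - (π / 5) ^ (1 - α) / (1 + α))
      (Set.Icc 0 1) := by
    apply strictAntiOn_of_deriv_neg (convex_Icc 0 1)
    · exact fun x hx => (hasD x (by linarith [hx.1])).continuousAt.continuousWithinAt
    · intro x hx
      rw [interior_Icc] at hx
      rw [(hasD x (by linarith [hx.1])).deriv]
      exact key hx.1.le hx.2.le
  have h1 : (2:ℝ) ^ (-(1:ℝ)) + 0.3 * ((1:ℝ) - 1) - (π / 5) ^ ((1:ℝ) - 1) / (1 + 1) = 0 := by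
    have hπ : (0:ℝ) < π / 5 := by positivity
    rw [show (1:ℝ) - 1 = 0 from by norm_num, Real.rpow_zero, Real.rpow_neg_one]
    norm_num
  refine ⟨hanti, h1, ?_⟩
  intro α hα
  rcases eq_or_lt_of_le hα.2 with h | h
  · rw [h]
    exact h1.ge
  · have h2 := hanti hα (Set.right_mem_Icc.mpr zero_le_one) h
    simp only at h2
    exact le_of_lt (lt_of_eq_of_lt h1.symm h2)
end
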